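/- arXiv:1406.6860 — 7 statements merged into one kernel-verified Lean document; each statement's English description precedes it below -/
import Mathlib

section
/- Let V be an additive commutative group, let Δ⁺ ⊆ V satisfy Δ⁺ ∩ (−Δ⁺) = ∅, and let β₁, …, β_s be a flip sequence from Δ⁺ with associated sets P₀ = Δ⁺, P₁, …, P_s. For β ∈ Δ⁺ let c(β) denote the number of indices j with β_j = β minus the number of indices j with β_j = −β. Then c(β) ∈ {0, 1} for every β ∈ Δ⁺, and P_s = (Δ⁺ ∖ S) ∪ (−S), where S = {β ∈ Δ⁺ : c(β) = 1}; in particular S is the set obtained from the multiset {β₁, …, β_s} by removing all pairs of opposite elements, and S ⊆ Δ⁺. -/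
/-- for a flip sequence `β 0, …, β (s-1)` from `Δpos` with associated
sets `P 0 = Δpos`, `P (j+1) = (P j \ {β j}) ∪ {-β j}`, the signed multiplicity
`c b` of each `b ∈ Δpos` is `0` or `1`, and the final set is
`(Δpos \ S) ∪ (-S)` where `S = {b ∈ Δpos | c b = 1}`. -/
theorem stmt_0 {V : Type*} [AddCommGroup V] [DecidableEq V]
    (Δpos : Set V) (hΔ : ∀ x ∈ Δpos, -x ∉ Δpos)
    (s : ℕ) (β : ℕ → V) (P : ℕ → Set V)
    (hP0 : P 0 = Δpos)
    (hPstep : ∀ j < s, P (j + 1) = (P j \ {β j}) ∪ {-β j})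
    (hmem : ∀ j < s, β j ∈ P j)
    (c : V → ℤ)
    (hc : ∀ b : V, c b =
      (((Finset.range s).filter (fun j => β j = b)).card : ℤ) -
      (((Finset.range s).filter (fun j => β j = -b)).card : ℤ))
    (S : Set V) (hS : S = {b ∈ Δpos | c b = 1}) :
    (∀ b ∈ Δpos, c b = 0 ∨ c b = 1) ∧
    P s = (Δpos \ S) ∪ (fun x => -x) '' S := by
  classical
  set cnt : ℕ → V → ℤ := fun j b =>
    (((Finset.range j).filter (fun i => β i = b)).card : ℤ) -
    (((Finset.range j).filter (fun i => β i = -b)).card : ℤ) with hcnt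
  have key : ∀ (j : ℕ) (p : ℕ → Prop) [DecidablePred p],
      ((Finset.range (j+1)).filter p).card =
      ((Finset.range j).filter p).card + (if p j then 1 else 0) := by
    intro j p _
    have hj : j ∉ Finset.range j := by simp
    rw [Finset.range_add_one, Finset.filter_insert]
    split_ifs with h
    · rw [Finset.card_insert_of_notMem (fun hh => hj (Finset.mem_filter.mp hh).1)]
    · ring
  have hstep : ∀ j b, cnt (j+1) b =
      cnt j b + (if β j = b then 1 else 0) - (if β j = -b then 1 else 0) := by
    intro j b
    simp only [hcnt]
    rw [key j (fun i => β i = b), key j (fun i => β i = -b)]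
    split_ifs <;> push_cast <;> ring
  have main : ∀ j ≤ s, (∀ b ∈ Δpos, cnt j b = 0 ∨ cnt j b = 1) ∧
      P j = (Δpos \ {b ∈ Δpos | cnt j b = 1}) ∪ (fun x => -x) '' {b ∈ Δpos | cnt j b = 1} := by
    intro j
    induction j with
    | zero =>
      intro _
      constructor
      · intro b _; left; simp [hcnt]
      · have : {b ∈ Δpos | cnt 0 b = 1} = (∅ : Set V) := by
          ext b; simp [hcnt]
        rw [this, hP0]; simp
    | succ j ih =>
      intro hj
      obtain ⟨ih1, ih2⟩ := ih (by omega)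
      have hbmem := hmem j (by omega)
      have hPs := hPstep j (by omega)
      rw [ih2] at hbmem
      rcases hbmem with hA | hB
      · -- Case A : β j ∈ Δpos \ S_j
        obtain ⟨hb1, hb2⟩ := hA
        have hb0 : cnt j (β j) = 0 := by
          rcases ih1 (β j) hb1 with h | h
          · exact h
          · exact absurd ⟨hb1, h⟩ hb2
        have hneg : -β j ∉ Δpos := hΔ _ hb1
        have hformula : ∀ b ∈ Δpos, cnt (j+1) b = cnt j b + (if β j = b then 1 else 0) := by
          intro b hb
          have : β j ≠ -b := by
            intro h
            exact hneg (by rw [h, neg_neg]; exact hb)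
          rw [hstep, if_neg this]; ring
        have h1 : ∀ b ∈ Δpos, cnt (j+1) b = 0 ∨ cnt (j+1) b = 1 := by
          intro b hb
          rw [hformula b hb]
          by_cases h : β j = b
          · right; rw [if_pos h, ← h, hb0]; norm_num
          · rw [if_neg h]; simpa using ih1 b hb
        refine ⟨h1, ?_⟩
        have hS' : {b ∈ Δpos | cnt (j+1) b = 1} =
            insert (β j) {b ∈ Δpos | cnt j b = 1} := by
          ext b
          simp only [Set.mem_setOf_eq, Set.mem_insert_iff]
          constructor
          · rintro ⟨hb, hcb⟩
            rw [hformula b hb] at hcb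
            by_cases h : β j = b
            · left; exact h.symm
            · right; rw [if_neg h] at hcb; exact ⟨hb, by linarith⟩
          · rintro (rfl | ⟨hb, hcb⟩)
            · refine ⟨hb1, ?_⟩
              rw [hformula _ hb1, if_pos rfl, hb0]; norm_num
            · refine ⟨hb, ?_⟩
              have h : β j ≠ b := by
                rintro rfl; rw [hb0] at hcb; norm_num at hcb
              rw [hformula b hb, if_neg h, hcb]; norm_num
        rw [hPs, ih2, hS']
        ext x
        simp only [Set.mem_union, Set.mem_diff, Set.mem_singleton_iff, Set.mem_image,
          Set.mem_setOf_eq, Set.mem_insert_iff, not_or]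
        constructor
        · rintro (⟨(⟨hx1, hx2⟩ | ⟨y, hy, hy3⟩), hx3⟩ | rfl)
          · exact Or.inl ⟨hx1, hx3, hx2⟩
          · exact Or.inr ⟨y, Or.inr hy, hy3⟩
          · exact Or.inr ⟨β j, Or.inl rfl, rfl⟩
        · rintro (⟨hx1, hx2, hx3⟩ | ⟨y, (rfl | hy), rfl⟩)
          · exact Or.inl ⟨Or.inl ⟨hx1, hx3⟩, hx2⟩
          · exact Or.inr rfl
          · refine Or.inl ⟨Or.inr ⟨y, hy, rfl⟩, fun h => ?_⟩
            exact hΔ _ hy.1 (by rw [h]; exact hb1)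
      · -- Case B : β j = -b₀ with b₀ ∈ S_j
        obtain ⟨b₀, ⟨hb1, hc1⟩, hbeq⟩ := hB
        have hbeq' : β j = -b₀ := hbeq.symm
        have hnegb : -β j = b₀ := by rw [hbeq', neg_neg]
        have hnotin : β j ∉ Δpos := by
          rw [hbeq']; exact hΔ _ hb1
        have hformula : ∀ b ∈ Δpos, cnt (j+1) b = cnt j b - (if b = b₀ then 1 else 0) := by
          intro b hb
          have h1 : β j ≠ b := fun h => hnotin (h ▸ hb)
          have h2 : (β j = -b) ↔ (b = b₀) := by
            rw [hbeq']
            constructor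
            · intro h; exact neg_injective h.symm
            · intro h; rw [h]
          rw [hstep, if_neg h1]
          by_cases h : b = b₀
          · rw [if_pos (h2.mpr h), if_pos h]; ring
          · rw [if_neg (fun hh => h (h2.mp hh)), if_neg h]; ring
        have h1 : ∀ b ∈ Δpos, cnt (j+1) b = 0 ∨ cnt (j+1) b = 1 := by
          intro b hb
          rw [hformula b hb]
          by_cases h : b = b₀
          · left; rw [if_pos h, h, hc1]; ring
          · rw [if_neg h]; simpa using ih1 b hb
        refine ⟨h1, ?_⟩
        have hS' : {b ∈ Δpos | cnt (j+1) b = 1} =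
            {b ∈ Δpos | cnt j b = 1} \ {b₀} := by
          ext b
          simp only [Set.mem_setOf_eq, Set.mem_diff, Set.mem_singleton_iff]
          constructor
          · rintro ⟨hb, hcb⟩
            rw [hformula b hb] at hcb
            by_cases h : b = b₀
            · rw [if_pos h, h, hc1] at hcb; norm_num at hcb
            · rw [if_neg h] at hcb
              exact ⟨⟨hb, by linarith⟩, h⟩
          · rintro ⟨⟨hb, hcb⟩, h⟩
            refine ⟨hb, ?_⟩
            rw [hformula b hb, if_neg h, hcb]; ring
        rw [hPs, ih2, hS']
        ext x
        simp only [Set.mem_union, Set.mem_diff, Set.mem_singleton_iff, Set.mem_image,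
          Set.mem_setOf_eq]
        constructor
        · rintro (⟨(⟨hx1, hx2⟩ | ⟨y, hy, hy3⟩), hx3⟩ | hxeq)
          · exact Or.inl ⟨hx1, fun h => hx2 h.1⟩
          · refine Or.inr ⟨y, ⟨hy, fun h => hx3 ?_⟩, hy3⟩
            rw [← hy3, h]; exact hbeq'.symm
          · have hxb : x = b₀ := by rw [hxeq, hnegb]
            subst hxb
            exact Or.inl ⟨hb1, fun h => h.2 rfl⟩
        · rintro (⟨hx1, hx2⟩ | ⟨y, ⟨hy, hyne⟩, rfl⟩)
          · by_cases h : x = b₀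
            · exact Or.inr (by rw [h, ← hnegb])
            · refine Or.inl ⟨Or.inl ⟨hx1, fun hP => hx2 ⟨hP, h⟩⟩, ?_⟩
              intro hh
              exact hnotin (hh ▸ hx1)
          · refine Or.inl ⟨Or.inr ⟨y, hy, rfl⟩, fun h => hyne ?_⟩
            rw [← hnegb, ← h, neg_neg]
  obtain ⟨m1, m2⟩ := main s le_rfl
  have hceq : ∀ b, c b = cnt s b := fun b => hc b
  have hSeq : S = {b ∈ Δpos | cnt s b = 1} := by
    rw [hS]; ext b; simp [hceq b]
  constructor
  · intro b hb; rw [hceq b]; exact m1 b hb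
  · rw [hSeq]; exact m2
end

section
/- Let W be a group, S ⊆ W a set of elements with s·s = 1 for every s ∈ S, and ℓ : W → ℕ a function such that ℓ(w) = 0 implies w = 1, and such that for every w ≠ 1 there exists s ∈ S with ℓ(s·w) < ℓ(w). Let ≤ be a relation on W satisfying: (i) y ≤ 1 implies y = 1; (ii) whenever y ≤ w and s ∈ S, either y ≤ s·w or s·y ≤ s·w. Let ≤′ be a reflexive and transitive relation on W satisfying: (a) for all s ∈ S and w ∈ W, if ℓ(s·w) < ℓ(w) then s·w ≤′ w; (b) whenever y ≤′ w and s ∈ S, either s·y ≤′ s·w or s·y ≤′ w. Then for all y, w ∈ W, y ≤ w implies y ≤′ w. -/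
/-- any reflexive transitive relation `le'` satisfying the two
closure properties (a), (b) refines a relation `le` satisfying the Bruhat-order
properties (i), (ii), for a group generated by involutions with a length
function. -/
theorem stmt_6 {W : Type*} [Group W] (S : Set W)
    (hS : ∀ s ∈ S, s * s = 1)
    (ℓ : W → ℕ) (hℓ : ∀ w : W, ℓ w = 0 → w = 1)
    (hdesc : ∀ w : W, w ≠ 1 → ∃ s ∈ S, ℓ (s * w) < ℓ w)
    (le le' : W → W → Prop)
    (hle1 : ∀ y : W, le y 1 → y = 1)
    (hle2 : ∀ y w : W, le y w → ∀ s ∈ S, le y (s * w) ∨ le (s * y) (s * w))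
    (hrefl : ∀ w : W, le' w w)
    (htrans : ∀ x y z : W, le' x y → le' y z → le' x z)
    (ha : ∀ s ∈ S, ∀ w : W, ℓ (s * w) < ℓ w → le' (s * w) w)
    (hb : ∀ y w : W, le' y w → ∀ s ∈ S, le' (s * y) (s * w) ∨ le' (s * y) w) :
    ∀ y w : W, le y w → le' y w := by
  suffices h : ∀ n, ∀ y w : W, ℓ w = n → le y w → le' y w by
    intro y w hyw; exact h (ℓ w) y w rfl hyw
  intro n
  induction n using Nat.strong_induction_on with
  | _ n ih =>
    intro y w hn hyw
    by_cases hw : w = 1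
    · subst hw
      have := hle1 y hyw
      subst this
      exact hrefl 1
    · obtain ⟨s, hs, hlt⟩ := hdesc w hw
      have hss : s * (s * w) = w := by rw [← mul_assoc, hS s hs, one_mul]
      have hew : le' (s * w) w := ha s hs w hlt
      have key : ∀ y', le y' (s * w) → le' y' (s * w) := fun y' h =>
        ih (ℓ (s * w)) (hn ▸ hlt) y' (s * w) rfl h
      rcases hle2 y w hyw s hs with h | h
      · exact htrans _ _ _ (key y h) hew
      · have h1 : le' (s * y) (s * w) := key _ h
        rcases hb (s * y) (s * w) h1 s hs with h2 | h2
        · rw [← mul_assoc, hS s hs, one_mul, hss] at h2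
          exact h2
        · rw [← mul_assoc, hS s hs, one_mul] at h2
          exact htrans _ _ _ h2 hew
end

section
/- Let V be a vector space over ℚ, let Π ⊆ V be a finite linearly independent subset, let π ⊆ V be a finite subset, and let b, b′ : π → Π be maps such that α = b(α) + b′(α) for every α ∈ π, b is injective, and b(π) ∩ b′(π) = ∅. Then every vector of V that lies in the ℚ-linear span of π and is a ℚ≥0-linear combination of elements of Π is a ℚ≥0-linear combination of elements of π. -/
/-!
Write `v = ∑_{β ∈ π} d β • β`. For `α ∈ π`, a linear functional `f` that is the coordinate of
`b α` on the linearly independent set `Π` sends `b β` to `δ_{αβ}` (as `b` is injective) and kills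
every `b' β` (as the images of `b` and `b'` are disjoint), so `f v = d α`. Evaluating `f` on the
nonnegative expansion of `v` over `Π` instead gives the coefficient of `b α` there, so `d α ≥ 0`.
-/

open Module

theorem LinearIndependent.exists_dual_apply_eq_ite {ι K V : Type*} [DivisionRing K]
    [AddCommGroup V] [Module K V] [DecidableEq ι] {v : ι → V} (hv : LinearIndependent K v)
    (i : ι) : ∃ f : Dual K V, ∀ j, f (v j) = if j = i then 1 else 0 := by
  obtain ⟨f, hf⟩ := LinearMap.exists_extend (Finsupp.lapply i ∘ₗ hv.repr)
  refine ⟨f, fun j => ?_⟩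
  have hvj : v j ∈ Submodule.span K (Set.range v) := Submodule.subset_span ⟨j, rfl⟩
  simpa [hv.repr_eq_single j ⟨v j, hvj⟩ rfl, Finsupp.single_apply] using
    congr($hf ⟨v j, hvj⟩)

theorem coeff_eq_coeff_of_sum_smul_eq {K V : Type*} [DivisionRing K] [AddCommGroup V]
    [Module K V] {Pi pi : Finset V}
    (hind : LinearIndependent K (Subtype.val : {v : V // v ∈ Pi} → V)) {b b' : V → V}
    (hb : ∀ α ∈ pi, b α ∈ Pi) (hb' : ∀ α ∈ pi, b' α ∈ Pi)
    (hsum : ∀ α ∈ pi, α = b α + b' α) (hinj : Set.InjOn b ↑pi)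
    (hdisj : ∀ α ∈ pi, ∀ α' ∈ pi, b α ≠ b' α') {c d : V → K}
    (h : ∑ β ∈ pi, d β • β = ∑ x ∈ Pi, c x • x) {α : V} (hα : α ∈ pi) :
    d α = c (b α) := by
  classical
  obtain ⟨f, hf⟩ := hind.exists_dual_apply_eq_ite ⟨b α, hb α hα⟩
  have hf_mem : ∀ x ∈ Pi, f x = if x = b α then 1 else 0 := fun x hx => by
    simpa using hf ⟨x, hx⟩
  have hfb : ∀ β ∈ pi, f (b β) = if β = α then 1 else 0 := fun β hβ => by
    simp only [hf_mem _ (hb β hβ), hinj.eq_iff hβ hα]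
  have hfb' : ∀ β ∈ pi, f (b' β) = 0 := fun β hβ => by
    simp [hf_mem _ (hb' β hβ), Ne.symm (hdisj α hα β hβ)]
  calc d α = ∑ β ∈ pi, d β * (f (b β) + f (b' β)) := by
        rw [Finset.sum_congr rfl fun β hβ => by rw [hfb β hβ, hfb' β hβ]]
        simp [hα]
    _ = f (∑ β ∈ pi, d β • β) := by
      rw [map_sum]
      exact Finset.sum_congr rfl fun β hβ => by
        rw [map_smul, smul_eq_mul, ← map_add, ← hsum β hβ]
    _ = ∑ x ∈ Pi, c x * f x := by simp [h]
    _ = c (b α) := by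
      rw [Finset.sum_congr rfl fun x hx => by rw [hf_mem x hx]]
      simp [hb α hα]

/-- abstract form of (QpiPi) in §6.4.1. -/
theorem stmt_9 {V : Type*} [AddCommGroup V] [Module ℚ V]
    (Pi pi : Finset V)
    (hind : LinearIndependent ℚ (Subtype.val : {v : V // v ∈ Pi} → V))
    (b b' : V → V)
    (hb : ∀ α ∈ pi, b α ∈ Pi) (hb' : ∀ α ∈ pi, b' α ∈ Pi)
    (hsum : ∀ α ∈ pi, α = b α + b' α)
    (hinj : Set.InjOn b ↑pi)
    (hdisj : ∀ α ∈ pi, ∀ α' ∈ pi, b α ≠ b' α') :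
    ∀ v : V, v ∈ Submodule.span ℚ (pi : Set V) →
      (∃ c : V → ℚ, (∀ x ∈ Pi, 0 ≤ c x) ∧ v = ∑ x ∈ Pi, c x • x) →
      ∃ c : V → ℚ, (∀ x ∈ pi, 0 ≤ c x) ∧ v = ∑ x ∈ pi, c x • x := by
  rintro v hv ⟨c, hc, rfl⟩
  obtain ⟨d, -, hd⟩ := Submodule.mem_span_finset.mp hv
  refine ⟨d, fun α hα => ?_, hd.symm⟩
  rw [coeff_eq_coeff_of_sum_smul_eq hind hb hb' hsum hinj hdisj hd hα]
  exact hc _ (hb α hα)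
end

section
/- Let y, s₀, s₁, s₂ be rational numbers with y < −1, 0 ≤ s₁, s₁ ≤ s₀, 0 ≤ s₂, s₂ ≤ s₀ + s₁, s₀ − s₁ ≤ −y, and (s₀ + s₁ − s₂)² − (s₀ − s₁)² = 2y·s₀ + s₂. Then s₀ = 0, s₁ = 0 and s₂ = 0. -/
/-- arithmetic core of §9.3 (subprincipal `B(1,1)^{(1)}` case). -/
theorem stmt_11 (y s₀ s₁ s₂ : ℚ) (hy : y < -1)
    (h1 : 0 ≤ s₁) (h2 : s₁ ≤ s₀) (h3 : 0 ≤ s₂) (h4 : s₂ ≤ s₀ + s₁)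
    (h5 : s₀ - s₁ ≤ -y)
    (heq : (s₀ + s₁ - s₂) ^ 2 - (s₀ - s₁) ^ 2 = 2 * y * s₀ + s₂) :
    s₀ = 0 ∧ s₁ = 0 ∧ s₂ = 0 := by
  have hs0 : s₀ = 0 := by
    nlinarith [sq_nonneg (s₀ + s₁ - s₂), mul_nonneg h1 h3, mul_nonneg (h1.trans h2) h3,
      mul_nonneg h1 (h1.trans h2), mul_le_mul_of_nonneg_right h5 (h1.trans h2),
      sq_nonneg (s₀ + s₁ - s₂ - 1), mul_nonneg h3 (sub_nonneg.2 h4)]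
  subst hs0
  have hs1 : s₁ = 0 := le_antisymm h2 h1
  subst hs1
  refine ⟨rfl, rfl, ?_⟩
  nlinarith [sq_nonneg s₂]
end

section
/- Fix positive integers m and n and set N = m + n. Let X be an (m,n)-sequence. If X(N) = 1 then f(σX) = f(X) + 2n, and if X(N) = −1 then f(σX) = f(X) − 2m. -/
/-- An `(m,n)`-sequence: a `±1`-valued function on `{1, …, m+n}` with exactly
`m` entries equal to `1` and `n` entries equal to `-1`. -/
def IsMNSeq (m n : ℕ) (X : ℕ → ℤ) : Prop :=
  (∀ i ∈ Finset.Icc 1 (m + n), X i = 1 ∨ X i = -1) ∧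
  ((Finset.Icc 1 (m + n)).filter (fun i => X i = 1)).card = m ∧
  ((Finset.Icc 1 (m + n)).filter (fun i => X i = -1)).card = n

/-- The total signed number of disorders
`f(X) = #{i<j : X i = 1, X j = -1} - #{i<j : X i = -1, X j = 1}`. -/
def disorder (m n : ℕ) (X : ℕ → ℤ) : ℤ :=
  ((((Finset.Icc 1 (m + n)) ×ˢ (Finset.Icc 1 (m + n))).filter
      (fun p => p.1 < p.2 ∧ X p.1 = 1 ∧ X p.2 = -1)).card : ℤ) -
  ((((Finset.Icc 1 (m + n)) ×ˢ (Finset.Icc 1 (m + n))).filter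
      (fun p => p.1 < p.2 ∧ X p.1 = -1 ∧ X p.2 = 1)).card : ℤ)

/-- The cyclic shift `σ`: `(σX)(1) = X(m+n)` and `(σX)(i) = X(i-1)` for `i ≥ 2`. -/
def cyclicShift (m n : ℕ) (X : ℕ → ℤ) : ℕ → ℤ :=
  fun i => if i = 1 then X (m + n) else X (i - 1)

/-- Weighted-sum identity: the signed pair-sum equals a weighted single sum. -/
lemma aux_T_eq (N : ℕ) (X : ℕ → ℤ) :
    ∑ p ∈ (Finset.Icc 1 N ×ˢ Finset.Icc 1 N).filter (fun p => p.1 < p.2),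
        (X p.1 - X p.2)
      = ∑ i ∈ Finset.Icc 1 N, ((N:ℤ) + 1 - 2*i) * X i := by
  rw [Finset.sum_filter]
  have split : ∀ p : ℕ × ℕ, (if p.1 < p.2 then X p.1 - X p.2 else 0)
      = (if p.1 < p.2 then X p.1 else 0) - (if p.1 < p.2 then X p.2 else 0) := by
    intro p; split <;> simp
  rw [Finset.sum_congr rfl (fun p _ => split p), Finset.sum_sub_distrib]
  have hA : ∑ p ∈ Finset.Icc 1 N ×ˢ Finset.Icc 1 N,
      (if p.1 < p.2 then X p.1 else 0)
      = ∑ i ∈ Finset.Icc 1 N, ((N - i : ℕ) : ℤ) * X i := by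
    rw [Finset.sum_product]
    refine Finset.sum_congr rfl fun i hi => ?_
    have he : (Finset.Icc 1 N).filter (fun j => (i, j).1 < (i, j).2) = Finset.Icc (i+1) N := by
      ext j; simp [Finset.mem_Icc]; omega
    rw [← Finset.sum_filter, he]
    simp only [Finset.sum_const, nsmul_eq_mul, Nat.card_Icc]
    congr 1; omega
  have hB : ∑ p ∈ Finset.Icc 1 N ×ˢ Finset.Icc 1 N,
      (if p.1 < p.2 then X p.2 else 0)
      = ∑ j ∈ Finset.Icc 1 N, ((j - 1 : ℕ) : ℤ) * X j := by
    rw [Finset.sum_product_right]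
    refine Finset.sum_congr rfl fun j hj => ?_
    simp only [Finset.mem_Icc] at hj
    have he : (Finset.Icc 1 N).filter (fun i => (i, j).1 < (i, j).2) = Finset.Icc 1 (j-1) := by
      ext i; simp [Finset.mem_Icc]; omega
    rw [← Finset.sum_filter, he]
    simp only [Finset.sum_const, nsmul_eq_mul, Nat.card_Icc]
    congr 1 <;> omega
  rw [hA, hB, ← Finset.sum_sub_distrib]
  refine Finset.sum_congr rfl fun i hi => ?_
  simp only [Finset.mem_Icc] at hi
  have h1 : ((N - i : ℕ) : ℤ) = (N : ℤ) - i := by omega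
  have h2 : ((i - 1 : ℕ) : ℤ) = (i : ℤ) - 1 := by omega
  rw [h1, h2]; ring

/-- Twice the disorder equals the signed pair-sum, for ±1-valued `X`. -/
lemma aux_two_disorder (m n : ℕ) (X : ℕ → ℤ)
    (h : ∀ i ∈ Finset.Icc 1 (m+n), X i = 1 ∨ X i = -1) :
    2 * disorder m n X
      = ∑ p ∈ (Finset.Icc 1 (m+n) ×ˢ Finset.Icc 1 (m+n)).filter
          (fun p => p.1 < p.2), (X p.1 - X p.2) := by
  have step : ∑ p ∈ (Finset.Icc 1 (m+n) ×ˢ Finset.Icc 1 (m+n)).filter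
          (fun p => p.1 < p.2), (X p.1 - X p.2)
      = ∑ p ∈ (Finset.Icc 1 (m+n) ×ˢ Finset.Icc 1 (m+n)).filter
          (fun p => p.1 < p.2),
        ((if X p.1 = 1 ∧ X p.2 = -1 then (2:ℤ) else 0)
          - (if X p.1 = -1 ∧ X p.2 = 1 then (2:ℤ) else 0)) := by
    refine Finset.sum_congr rfl fun p hp => ?_
    simp only [Finset.mem_filter, Finset.mem_product] at hp
    rcases h p.1 hp.1.1 with h1 | h1 <;> rcases h p.2 hp.1.2 with h2 | h2 <;>
      simp [h1, h2]
  rw [step, Finset.sum_sub_distrib, ← Finset.sum_filter, ← Finset.sum_filter]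
  simp only [Finset.sum_const, Finset.filter_filter, nsmul_eq_mul]
  rw [disorder]
  ring

/-- The sum of the values of an `(m,n)`-sequence is `m - n`. -/
lemma aux_sum_X (m n : ℕ) (X : ℕ → ℤ)
    (h : ∀ i ∈ Finset.Icc 1 (m+n), X i = 1 ∨ X i = -1)
    (h1 : ((Finset.Icc 1 (m + n)).filter (fun i => X i = 1)).card = m)
    (h2 : ((Finset.Icc 1 (m + n)).filter (fun i => X i = -1)).card = n) :
    ∑ i ∈ Finset.Icc 1 (m+n), X i = (m : ℤ) - n := by
  rw [← Finset.sum_filter_add_sum_filter_not (Finset.Icc 1 (m+n)) (fun i => X i = 1)]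
  have e2 : (Finset.Icc 1 (m+n)).filter (fun i => ¬ X i = 1)
      = (Finset.Icc 1 (m+n)).filter (fun i => X i = -1) := by
    apply Finset.filter_congr
    intro i hi; rcases h i hi with h' | h' <;> simp [h']
  have s1 : ∑ i ∈ (Finset.Icc 1 (m+n)).filter (fun i => X i = 1), X i = (m:ℤ) := by
    rw [Finset.sum_congr rfl (fun i hi => (Finset.mem_filter.mp hi).2),
      Finset.sum_const, h1]; simp
  have s2 : ∑ i ∈ (Finset.Icc 1 (m+n)).filter (fun i => X i = -1), X i = -(n:ℤ) := by
    rw [Finset.sum_congr rfl (fun i hi => (Finset.mem_filter.mp hi).2),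
      Finset.sum_const, h2]; simp
  rw [e2, s1, s2]; ring

/-- How the weighted sum transforms under the cyclic shift. -/
lemma aux_shift (m n : ℕ) (hN : 0 < m + n) (X : ℕ → ℤ) :
    ∑ i ∈ Finset.Icc 1 (m+n), (((m+n : ℕ):ℤ) + 1 - 2*i) * cyclicShift m n X i
      = ∑ i ∈ Finset.Icc 1 (m+n), (((m+n : ℕ):ℤ) + 1 - 2*i) * X i
        + 2*((m:ℤ)+n) * X (m+n) - 2 * ∑ i ∈ Finset.Icc 1 (m+n), X i := by
  set N := m + n with hNdef
  have hins : Finset.Icc 1 N = insert 1 (Finset.Icc 2 N) := by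
    ext i; simp [Finset.mem_Icc]; omega
  have hnotmem : (1 : ℕ) ∉ Finset.Icc 2 N := by simp
  have hmap : Finset.Icc 2 N = (Finset.Icc 1 (N-1)).map (addRightEmbedding 1) := by
    rw [Finset.map_add_right_Icc]
    congr 1; omega
  have step1 : ∑ i ∈ Finset.Icc 1 N, ((N:ℤ) + 1 - 2*i) * cyclicShift m n X i
      = ((N:ℤ) - 1) * X N
        + ∑ k ∈ Finset.Icc 1 (N-1), (((N:ℤ) + 1 - 2*k) - 2) * X k := by
    rw [hins, Finset.sum_insert hnotmem, hmap, Finset.sum_map]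
    congr 1
    · rw [show cyclicShift m n X 1 = X N from rfl]; push_cast; ring
    · refine Finset.sum_congr rfl fun k hk => ?_
      simp only [Finset.mem_Icc] at hk
      have hk1 : addRightEmbedding 1 k = k + 1 := rfl
      rw [hk1]
      have hy : cyclicShift m n X (k + 1) = X k := by
        simp [cyclicShift, Nat.add_sub_cancel]
        omega
      rw [hy]
      push_cast
      ring
  have step2 : ∑ k ∈ Finset.Icc 1 (N-1), (((N:ℤ) + 1 - 2*k) - 2) * X k
      = ∑ k ∈ Finset.Icc 1 N, (((N:ℤ) + 1 - 2*k) - 2) * X k + ((N:ℤ) + 1) * X N := by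
    have hN' : N = (N - 1) + 1 := by omega
    rw [hN', Finset.sum_Icc_succ_top (by omega : 1 ≤ N - 1 + 1)]
    rw [← hN']
    push_cast
    ring
  have step3 : ∑ k ∈ Finset.Icc 1 N, (((N:ℤ) + 1 - 2*k) - 2) * X k
      = ∑ k ∈ Finset.Icc 1 N, ((N:ℤ) + 1 - 2*k) * X k - 2 * ∑ k ∈ Finset.Icc 1 N, X k := by
    rw [Finset.mul_sum, ← Finset.sum_sub_distrib]
    exact Finset.sum_congr rfl fun k _ => by ring
  rw [step1, step2, step3]
  have : ((N:ℤ)) = (m:ℤ) + n := by push_cast [hNdef]; ring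
  rw [this]
  ring

/-- `f(σX) = f(X) + 2n` if `X(N) = 1` and `f(σX) = f(X) - 2m`
if `X(N) = -1`. -/
theorem stmt_13 (m n : ℕ) (hm : 0 < m) (hn : 0 < n)
    (X : ℕ → ℤ) (hX : IsMNSeq m n X) :
    (X (m + n) = 1 →
      disorder m n (cyclicShift m n X) = disorder m n X + 2 * n) ∧
    (X (m + n) = -1 →
      disorder m n (cyclicShift m n X) = disorder m n X - 2 * m) := by
  obtain ⟨hpm, h1, h2⟩ := hX
  have hN : 0 < m + n := by omega
  have hY : ∀ i ∈ Finset.Icc 1 (m+n),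
      cyclicShift m n X i = 1 ∨ cyclicShift m n X i = -1 := by
    intro i hi
    simp only [Finset.mem_Icc] at hi
    by_cases h' : i = 1
    · simpa [cyclicShift, h'] using hpm (m+n) (by simp [Finset.mem_Icc]; omega)
    · simpa [cyclicShift, h'] using hpm (i-1) (by simp [Finset.mem_Icc]; omega)
  have d1 := aux_two_disorder m n X hpm
  have d2 := aux_two_disorder m n (cyclicShift m n X) hY
  rw [aux_T_eq] at d1 d2
  rw [aux_shift m n hN X, aux_sum_X m n X hpm h1 h2] at d2
  constructor <;> intro hXN <;> rw [hXN] at d2 <;> push_cast at d1 d2 ⊢ <;> linarith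
end

section
/- Fix positive integers m and n and set N = m + n. For every (m,n)-sequence X, the sum over all cyclic shifts vanishes: Σ_{k=0}^{N−1} f(σ^k X) = 0. -/
/-- Gauss summation in `ℤ`. -/
lemma stmt14_gauss (N : ℕ) : 2 * ∑ i ∈ Finset.Icc 1 N, (i:ℤ) = N * (N+1) := by
  induction N with
  | zero => simp
  | succ N ih =>
    rw [Finset.sum_Icc_succ_top (by omega)]
    push_cast
    push_cast at ih
    linarith

/-- The weights `N + 1 - 2 i` sum to zero over `{1, …, N}`. -/
lemma stmt14_wsum (N : ℕ) : ∑ i ∈ Finset.Icc 1 N, ((N:ℤ) + 1 - 2 * i) = 0 := by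
  have h := stmt14_gauss N
  rw [Finset.sum_sub_distrib, Finset.sum_const, Nat.card_Icc, ← Finset.mul_sum,
    nsmul_eq_mul]
  have : (N + 1 - 1 : ℕ) = N := by omega
  rw [this]
  linarith

/-- Explicit formula for the `k`-fold cyclic shift on `{1, …, m+n}`. -/
lemma stmt14_shift_iter (m n : ℕ) (X : ℕ → ℤ) :
    ∀ k, k ≤ m + n → ∀ i, 1 ≤ i → i ≤ m + n →
    (cyclicShift m n)^[k] X i = if i ≤ k then X (i + (m+n) - k) else X (i - k) := by
  have happ : ∀ (Y : ℕ → ℤ) (i : ℕ),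
      cyclicShift m n Y i = if i = 1 then Y (m + n) else Y (i - 1) := fun _ _ => rfl
  intro k
  induction k with
  | zero => intro _ i hi1 _; simp [Nat.not_le.mpr hi1]
  | succ k ih =>
    intro hk i hi1 hiN
    rw [Function.iterate_succ_apply', happ]
    by_cases h1 : i = 1
    · subst h1
      rw [if_pos rfl, ih (by omega) (m+n) (by omega) le_rfl,
        if_neg (by omega), if_pos (by omega)]
      congr 1
      omega
    · rw [if_neg h1, ih (by omega) (i-1) (by omega) (by omega)]
      by_cases h2 : i ≤ k + 1
      · rw [if_pos (by omega), if_pos h2]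
        congr 1
        omega
      · rw [if_neg (by omega), if_neg h2]
        congr 1
        omega

/-- Cyclic shifts preserve `±1`-valuedness. -/
lemma stmt14_shift_pm (m n : ℕ) (X : ℕ → ℤ)
    (hpm : ∀ i ∈ Finset.Icc 1 (m+n), X i = 1 ∨ X i = -1)
    (k : ℕ) (hk : k ≤ m + n) :
    ∀ i ∈ Finset.Icc 1 (m+n),
      (cyclicShift m n)^[k] X i = 1 ∨ (cyclicShift m n)^[k] X i = -1 := by
  intro i hi
  rw [Finset.mem_Icc] at hi
  rw [stmt14_shift_iter m n X k hk i hi.1 hi.2]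
  split_ifs with h
  · exact hpm _ (Finset.mem_Icc.mpr (by omega))
  · exact hpm _ (Finset.mem_Icc.mpr (by omega))

/-- At a fixed position, summing over all cyclic shifts gives the total sum. -/
lemma stmt14_shift_sum (m n : ℕ) (X : ℕ → ℤ) (i : ℕ) (hi1 : 1 ≤ i) (hiN : i ≤ m+n) :
    ∑ k ∈ Finset.range (m+n), (cyclicShift m n)^[k] X i
      = ∑ j ∈ Finset.Icc 1 (m+n), X j := by
  have hrw : ∀ k ∈ Finset.range (m+n),
      (cyclicShift m n)^[k] X i = X (if i ≤ k then i + (m+n) - k else i - k) := by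
    intro k hk
    rw [Finset.mem_range] at hk
    rw [stmt14_shift_iter m n X k (by omega) i hi1 hiN]
    split_ifs <;> rfl
  rw [Finset.sum_congr rfl hrw]
  apply Finset.sum_nbij' (i := fun k => if i ≤ k then i + (m+n) - k else i - k)
    (j := fun j => if j ≤ i then i - j else i + (m+n) - j)
  · intro k hk
    rw [Finset.mem_range] at hk
    rw [Finset.mem_Icc]
    split_ifs <;> omega
  · intro j hj
    rw [Finset.mem_Icc] at hj
    rw [Finset.mem_range]
    split_ifs <;> omega
  · intro k hk
    rw [Finset.mem_range] at hk
    split_ifs <;> omega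
  · intro j hj
    rw [Finset.mem_Icc] at hj
    split_ifs <;> omega
  · intro k _
    rfl

/-- For a `±1`-valued sequence, `2 f(X) = ∑ᵢ X(i) (N + 1 - 2 i)`. -/
lemma stmt14_two_disorder (m n : ℕ) (X : ℕ → ℤ)
    (hpm : ∀ i ∈ Finset.Icc 1 (m+n), X i = 1 ∨ X i = -1) :
    2 * disorder m n X =
      ∑ i ∈ Finset.Icc 1 (m+n), X i * ((m+n : ℤ) + 1 - 2 * i) := by
  classical
  set s := Finset.Icc 1 (m+n) with hs
  have step1 : 2 * disorder m n X =
      ∑ p ∈ s ×ˢ s, (if p.1 < p.2 then X p.1 - X p.2 else 0) := by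
    unfold disorder
    rw [Finset.card_filter, Finset.card_filter]
    push_cast
    rw [mul_sub, Finset.mul_sum, Finset.mul_sum, ← Finset.sum_sub_distrib]
    apply Finset.sum_congr rfl
    intro p hp
    obtain ⟨hp1, hp2⟩ := Finset.mem_product.mp hp
    rcases hpm p.1 hp1 with h1 | h1 <;> rcases hpm p.2 hp2 with h2 | h2 <;>
      by_cases hlt : p.1 < p.2 <;> simp [h1, h2, hlt]
  rw [step1, Finset.sum_product]
  have split : ∀ i j : ℕ, (if i < j then X i - X j else 0)
      = (if i < j then X i else 0) - (if i < j then X j else 0) := by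
    intro i j; split_ifs <;> ring
  simp only [split]
  simp only [Finset.sum_sub_distrib]
  have e1 : ∀ i ∈ s, ∑ j ∈ s, (if i < j then X i else 0)
      = ((m+n - i : ℕ) : ℤ) * X i := by
    intro i hi
    rw [Finset.mem_Icc] at hi
    rw [← Finset.sum_filter]
    have hf : s.filter (fun j => i < j) = Finset.Icc (i+1) (m+n) := by
      ext j; simp only [hs, Finset.mem_filter, Finset.mem_Icc]; omega
    rw [hf, Finset.sum_const, Nat.card_Icc, nsmul_eq_mul]
    congr 1
    omega
  have e2 : ∑ i ∈ s, ∑ j ∈ s, (if i < j then X j else 0)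
      = ∑ j ∈ s, ((j - 1 : ℕ) : ℤ) * X j := by
    rw [Finset.sum_comm]
    apply Finset.sum_congr rfl
    intro j hj
    rw [Finset.mem_Icc] at hj
    rw [← Finset.sum_filter]
    have hf : s.filter (fun i => i < j) = Finset.Icc 1 (j-1) := by
      ext i; simp only [hs, Finset.mem_filter, Finset.mem_Icc]; omega
    rw [hf, Finset.sum_const, Nat.card_Icc, nsmul_eq_mul]
    norm_num
  rw [Finset.sum_congr rfl e1, e2, ← Finset.sum_sub_distrib]
  apply Finset.sum_congr rfl
  intro i hi
  rw [Finset.mem_Icc] at hi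
  have h1 : ((m+n - i : ℕ) : ℤ) = (m+n : ℤ) - i := by
    push_cast [hi.2]; ring
  have h2 : ((i - 1 : ℕ) : ℤ) = (i : ℤ) - 1 := by
    push_cast [hi.1]; ring
  rw [h1, h2]
  ring

/-- the sum of `f` over all cyclic shifts of an `(m,n)`-sequence
vanishes. -/
theorem stmt_14 (m n : ℕ) (hm : 0 < m) (hn : 0 < n)
    (X : ℕ → ℤ) (hX : IsMNSeq m n X) :
    ∑ k ∈ Finset.range (m + n), disorder m n ((cyclicShift m n)^[k] X) = 0 := by
  have hpm := hX.1
  have key : ∀ k ∈ Finset.range (m+n),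
      2 * disorder m n ((cyclicShift m n)^[k] X)
        = ∑ i ∈ Finset.Icc 1 (m+n),
            ((cyclicShift m n)^[k] X i) * ((m+n : ℤ) + 1 - 2 * i) := by
    intro k hk
    rw [Finset.mem_range] at hk
    exact stmt14_two_disorder m n _ (stmt14_shift_pm m n X hpm k (by omega))
  have h2 : 2 * ∑ k ∈ Finset.range (m + n),
      disorder m n ((cyclicShift m n)^[k] X) = 0 := by
    rw [Finset.mul_sum, Finset.sum_congr rfl key, Finset.sum_comm]
    have e : ∀ i ∈ Finset.Icc 1 (m+n),
        ∑ k ∈ Finset.range (m+n),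
          ((cyclicShift m n)^[k] X i) * ((m+n : ℤ) + 1 - 2 * i)
        = (∑ j ∈ Finset.Icc 1 (m+n), X j) * ((m+n : ℤ) + 1 - 2 * i) := by
      intro i hi
      rw [Finset.mem_Icc] at hi
      rw [← Finset.sum_mul, stmt14_shift_sum m n X i hi.1 hi.2]
    rw [Finset.sum_congr rfl e, ← Finset.mul_sum]
    have hw := stmt14_wsum (m+n)
    push_cast at hw
    rw [hw, mul_zero]
  linarith
end

section
/- Fix positive integers m and n and set N = m + n. For every (m,n)-sequence X there exist integers i and j with 0 ≤ i ≤ N−1 and 0 ≤ j ≤ N−1 such that 0 ≤ f(σ^i X) < 2m and −2n < f(σ^j X) ≤ 0. -/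
namespace Stmt15

/-- split a sum over `Icc 1 (p+1)` at the bottom. -/
lemma sum_split_bot (p : ℕ) (f : ℕ → ℤ) :
    ∑ i ∈ Finset.Icc 1 (p+1), f i = f 1 + ∑ i ∈ Finset.Icc 1 p, f (i+1) := by
  have e1 : Finset.Icc 1 (p+1) = insert 1 (Finset.Icc 2 (p+1)) := by
    ext x; simp [Finset.mem_Icc]; omega
  have e2 : (1:ℕ) ∉ Finset.Icc 2 (p+1) := by simp
  rw [e1, Finset.sum_insert e2]
  congr 1
  rw [show Finset.Icc 2 (p+1) = Finset.Icc (1+1) (p+1) from rfl,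
    ← Finset.map_add_right_Icc 1 p 1, Finset.sum_map]
  simp

lemma sum_split_top (p : ℕ) (f : ℕ → ℤ) :
    ∑ i ∈ Finset.Icc 1 (p+1), f i = (∑ i ∈ Finset.Icc 1 p, f i) + f (p+1) :=
  Finset.sum_Icc_succ_top (by omega) f

/-- `∑_{i=1}^N (N+1-2i) = 0`. -/
lemma coeff_sum_zero : ∀ N : ℕ, ∑ i ∈ Finset.Icc 1 N, ((N:ℤ) + 1 - 2 * i) = 0 := by
  intro N
  induction N with
  | zero => simp
  | succ p ih =>
    rw [sum_split_top]
    have h1 : ∑ i ∈ Finset.Icc 1 p, (((p:ℤ)+1) + 1 - 2 * i)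
        = (∑ i ∈ Finset.Icc 1 p, ((p:ℤ) + 1 - 2 * i)) + ∑ i ∈ Finset.Icc 1 p, (1:ℤ) := by
      rw [← Finset.sum_add_distrib]
      apply Finset.sum_congr rfl
      intro i _; push_cast; ring
    push_cast at h1 ⊢
    rw [h1, ih]
    simp [Nat.card_Icc]
    push_cast
    ring

/-- the doubled disorder number as a weighted sum. -/
lemma two_disorder (m n : ℕ) (Y : ℕ → ℤ)
    (hY : ∀ i ∈ Finset.Icc 1 (m+n), Y i = 1 ∨ Y i = -1) :
    2 * disorder m n Y
      = ∑ i ∈ Finset.Icc 1 (m+n), (((m+n:ℕ):ℤ) + 1 - 2 * i) * Y i := by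
  set N := m + n with hN
  set S := Finset.Icc 1 N with hS
  have c1 : ((((S ×ˢ S).filter
      (fun p => p.1 < p.2 ∧ Y p.1 = 1 ∧ Y p.2 = -1)).card : ℤ))
      = ∑ p ∈ S ×ˢ S, (if p.1 < p.2 ∧ Y p.1 = 1 ∧ Y p.2 = -1 then (1:ℤ) else 0) := by
    rw [Finset.card_filter]; push_cast; rfl
  have c2 : ((((S ×ˢ S).filter
      (fun p => p.1 < p.2 ∧ Y p.1 = -1 ∧ Y p.2 = 1)).card : ℤ))
      = ∑ p ∈ S ×ˢ S, (if p.1 < p.2 ∧ Y p.1 = -1 ∧ Y p.2 = 1 then (1:ℤ) else 0) := by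
    rw [Finset.card_filter]; push_cast; rfl
  have step1 : 2 * disorder m n Y
      = ∑ p ∈ S ×ˢ S, (if p.1 < p.2 then Y p.1 - Y p.2 else 0) := by
    rw [show disorder m n Y = _ - _ from rfl, c1, c2, ← Finset.sum_sub_distrib,
      Finset.mul_sum]
    apply Finset.sum_congr rfl
    rintro ⟨a, b⟩ hab
    rw [Finset.mem_product] at hab
    rcases hY a hab.1 with h1 | h1 <;> rcases hY b hab.2 with h2 | h2 <;>
      by_cases hlt : a < b <;> simp [h1, h2, hlt]
  rw [step1, Finset.sum_product]
  have inner : ∀ i ∈ S, ∑ j ∈ S, (if i < j then Y i - Y j else 0)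
      = (((N - i : ℕ):ℤ)) * Y i - ∑ j ∈ Finset.Icc (i+1) N, Y j := by
    intro i hi
    rw [← Finset.sum_filter]
    have hf : S.filter (fun j => i < j) = Finset.Icc (i+1) N := by
      ext j; simp [hS, Finset.mem_Icc, Finset.mem_filter]; omega
    rw [hf, Finset.sum_sub_distrib, Finset.sum_const, Nat.card_Icc]
    simp [nsmul_eq_mul]
  rw [Finset.sum_congr rfl inner, Finset.sum_sub_distrib]
  have swap : ∑ i ∈ S, ∑ j ∈ Finset.Icc (i+1) N, Y j
      = ∑ j ∈ S, (((j - 1 : ℕ):ℤ)) * Y j := by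
    have e : ∀ i ∈ S, ∑ j ∈ Finset.Icc (i+1) N, Y j
        = ∑ j ∈ S, (if i < j then Y j else 0) := by
      intro i hi
      rw [← Finset.sum_filter]
      congr 1
      ext j; simp [hS, Finset.mem_Icc, Finset.mem_filter]; omega
    rw [Finset.sum_congr rfl e, Finset.sum_comm]
    apply Finset.sum_congr rfl
    intro j hj
    rw [← Finset.sum_filter]
    have hf : S.filter (fun i => i < j) = Finset.Icc 1 (j-1) := by
      ext i
      rw [hS, Finset.mem_Icc] at hj
      simp [hS, Finset.mem_Icc, Finset.mem_filter]; omega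
    rw [hf, Finset.sum_const, Nat.card_Icc, nsmul_eq_mul]
    norm_num
  rw [swap, ← Finset.sum_sub_distrib]
  apply Finset.sum_congr rfl
  intro i hi
  rw [hS, Finset.mem_Icc] at hi
  have h1 : ((N - i : ℕ):ℤ) = (N:ℤ) - i := by omega
  have h2 : ((i - 1 : ℕ):ℤ) = (i:ℤ) - 1 := by omega
  rw [h1, h2]; ring

/-- key summation identity for a shifted sequence. -/
lemma key_sum (N : ℕ) (hN : 1 ≤ N) (Y Z : ℕ → ℤ)
    (hZ1 : Z 1 = Y N) (hZ : ∀ i, 2 ≤ i → i ≤ N → Z i = Y (i-1)) :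
    ∑ i ∈ Finset.Icc 1 N, ((N:ℤ) + 1 - 2 * i) * Z i
      = (∑ i ∈ Finset.Icc 1 N, ((N:ℤ) + 1 - 2 * i) * Y i)
        + 2 * N * Y N - 2 * (∑ i ∈ Finset.Icc 1 N, Y i) := by
  obtain ⟨p, rfl⟩ : ∃ p, N = p + 1 := ⟨N - 1, by omega⟩
  push_cast
  rw [sum_split_bot p (fun i => ((p:ℤ)+1 + 1 - 2 * i) * Z i)]
  have h1 : ∀ i ∈ Finset.Icc 1 p, (((p:ℤ)+1) + 1 - 2 * (i+1:ℕ)) * Z (i+1)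
      = (((p:ℤ)+1) + 1 - 2 * i) * Y i - 2 * Y i := by
    intro i hi
    rw [Finset.mem_Icc] at hi
    rw [hZ (i+1) (by omega) (by omega)]
    simp only [Nat.add_sub_cancel]
    push_cast
    ring
  rw [Finset.sum_congr rfl h1, Finset.sum_sub_distrib, ← Finset.mul_sum]
  rw [sum_split_top p (fun i => ((p:ℤ)+1 + 1 - 2 * i) * Y i),
      sum_split_top p Y, hZ1]
  push_cast
  ring

lemma key_sum2 (N : ℕ) (hN : 1 ≤ N) (Y Z : ℕ → ℤ)
    (hZ1 : Z 1 = Y N) (hZ : ∀ i, 2 ≤ i → i ≤ N → Z i = Y (i-1)) :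
    ∑ i ∈ Finset.Icc 1 N, Z i = ∑ i ∈ Finset.Icc 1 N, Y i := by
  obtain ⟨p, rfl⟩ : ∃ p, N = p + 1 := ⟨N - 1, by omega⟩
  rw [sum_split_bot p Z, sum_split_top p Y, hZ1]
  have h1 : ∀ i ∈ Finset.Icc 1 p, Z (i+1) = Y i := by
    intro i hi
    rw [Finset.mem_Icc] at hi
    rw [hZ (i+1) (by omega) (by omega)]
    simp
  rw [Finset.sum_congr rfl h1]
  ring

lemma iterate_shift_eq (m n : ℕ) (Y : ℕ → ℤ) :
    ∀ k, k ≤ m + n → ∀ i, 1 ≤ i → i ≤ m + n →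
      ((cyclicShift m n)^[k] Y) i
        = if k < i then Y (i - k) else Y (m + n - k + i) := by
  intro k
  induction k with
  | zero =>
    intro _ i hi1 hi2
    rw [Function.iterate_zero_apply, if_pos (by omega : 0 < i)]
    simp
  | succ k ih =>
    intro hk i hi1 hi2
    rw [Function.iterate_succ_apply']
    show (if i = 1 then ((cyclicShift m n)^[k] Y) (m+n)
      else ((cyclicShift m n)^[k] Y) (i-1)) = _
    by_cases h1 : i = 1
    · subst h1
      rw [if_pos rfl, ih (by omega) (m+n) (by omega) le_rfl,
          if_pos (by omega), if_neg (by omega)]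
      congr 1; omega
    · rw [if_neg h1, ih (by omega) (i-1) (by omega) (by omega)]
      by_cases h2 : k + 1 < i
      · rw [if_pos (by omega), if_pos h2]; congr 1; omega
      · rw [if_neg (by omega), if_neg h2]; congr 1; omega

lemma iterate_N (m n : ℕ) (Y : ℕ → ℤ) (i : ℕ) (hi1 : 1 ≤ i) (hi2 : i ≤ m + n) :
    ((cyclicShift m n)^[m+n] Y) i = Y i := by
  rw [iterate_shift_eq m n Y (m+n) le_rfl i hi1 hi2, if_neg (by omega)]
  congr 1; omega

lemma iterate_congr (m n : ℕ) (Y Z : ℕ → ℤ)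
    (h : ∀ i ∈ Finset.Icc 1 (m+n), Y i = Z i) (k : ℕ) :
    ∀ i ∈ Finset.Icc 1 (m+n),
      ((cyclicShift m n)^[k] Y) i = ((cyclicShift m n)^[k] Z) i := by
  induction k with
  | zero => exact h
  | succ k ih =>
    intro i hi
    rw [Finset.mem_Icc] at hi
    rw [Function.iterate_succ_apply', Function.iterate_succ_apply']
    show (if i = 1 then _ else _) = (if i = 1 then _ else _)
    by_cases h1 : i = 1
    · rw [if_pos h1, if_pos h1]
      exact ih (m+n) (by rw [Finset.mem_Icc]; omega)
    · rw [if_neg h1, if_neg h1]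
      exact ih (i-1) (by rw [Finset.mem_Icc]; omega)

lemma rot_sum (m n : ℕ) (Y : ℕ → ℤ) (i : ℕ) (hi1 : 1 ≤ i) (hi2 : i ≤ m + n) :
    ∑ k ∈ Finset.range (m+n), ((cyclicShift m n)^[k] Y) i
      = ∑ j ∈ Finset.Icc 1 (m+n), Y j := by
  have e : ∀ k ∈ Finset.range (m+n), ((cyclicShift m n)^[k] Y) i
      = if k < i then Y (i - k) else Y (m + n - k + i) := by
    intro k hk
    rw [Finset.mem_range] at hk
    exact iterate_shift_eq m n Y k (by omega) i hi1 hi2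
  rw [Finset.sum_congr rfl e, Finset.sum_ite]
  have f1 : (Finset.range (m+n)).filter (fun k => k < i) = Finset.range i := by
    ext k; simp [Finset.mem_range, Finset.mem_filter]; omega
  have f2 : (Finset.range (m+n)).filter (fun k => ¬ k < i) = Finset.Ico i (m+n) := by
    ext k; simp [Finset.mem_range, Finset.mem_filter, Finset.mem_Ico]; omega
  rw [f1, f2]
  have g1 : ∑ k ∈ Finset.range i, Y (i - k) = ∑ j ∈ Finset.Icc 1 i, Y j := by
    apply Finset.sum_nbij' (fun k => i - k) (fun j => i - j) <;>
      intros <;> simp_all [Finset.mem_range, Finset.mem_Icc] <;> omega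
  have g2 : ∑ k ∈ Finset.Ico i (m+n), Y (m + n - k + i)
      = ∑ j ∈ Finset.Icc (i+1) (m+n), Y j := by
    apply Finset.sum_nbij' (fun k => m + n - k + i) (fun j => m + n + i - j) <;>
      intros <;> simp_all [Finset.mem_Ico, Finset.mem_Icc] <;> omega
  have e1 : Finset.Icc 1 i = Finset.Ioc 0 i := by ext x; simp; omega
  have e2 : Finset.Icc (i+1) (m+n) = Finset.Ioc i (m+n) := by ext x; simp
  have e3 : Finset.Icc 1 (m+n) = Finset.Ioc 0 (m+n) := by ext x; simp; omega
  rw [g1, g2, e1, e2, e3]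
  exact Finset.sum_Ioc_consecutive Y (by omega) (by omega)

lemma disorder_congr {m n : ℕ} {Y Z : ℕ → ℤ}
    (h : ∀ i ∈ Finset.Icc 1 (m+n), Y i = Z i) :
    disorder m n Y = disorder m n Z := by
  unfold disorder
  have key : ∀ u v : ℤ, (Finset.filter (fun p : ℕ × ℕ => p.1 < p.2 ∧ Y p.1 = u ∧ Y p.2 = v)
      (Finset.Icc 1 (m+n) ×ˢ Finset.Icc 1 (m+n)))
      = Finset.filter (fun p : ℕ × ℕ => p.1 < p.2 ∧ Z p.1 = u ∧ Z p.2 = v)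
      (Finset.Icc 1 (m+n) ×ˢ Finset.Icc 1 (m+n)) := by
    intro u v
    apply Finset.filter_congr
    rintro ⟨a, b⟩ hab
    rw [Finset.mem_product] at hab
    rw [h a hab.1, h b hab.2]
  rw [key 1 (-1), key (-1) 1]

lemma climb (m n : ℕ) (hm : 0 < m) (f : ℕ → ℤ)
    (hstep : ∀ k, f (k+1) = f k + 2*n ∨ f (k+1) = f k - 2*m) :
    ∀ d k, 0 ≤ f k → f (k + d) ≤ 0 → ∃ i, 0 ≤ f i ∧ f i < 2*m := by
  intro d
  induction d with
  | zero =>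
    intro k h1 h2
    simp only [Nat.add_zero] at h2
    exact ⟨k, h1, by omega⟩
  | succ d ih =>
    intro k h1 h2
    by_cases hlt : f k < 2*m
    · exact ⟨k, h1, hlt⟩
    · have hs := hstep k
      exact ih (k+1) (by omega) (by rw [show k+1+d = k+(d+1) by omega]; exact h2)

lemma descend (m n : ℕ) (hn : 0 < n) (f : ℕ → ℤ)
    (hstep : ∀ k, f (k+1) = f k + 2*n ∨ f (k+1) = f k - 2*m) :
    ∀ d k, f k ≤ 0 → 0 ≤ f (k + d) → ∃ j, -(2*(n:ℤ)) < f j ∧ f j ≤ 0 := by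
  intro d
  induction d with
  | zero =>
    intro k h1 h2
    simp only [Nat.add_zero] at h2
    exact ⟨k, by omega, h1⟩
  | succ d ih =>
    intro k h1 h2
    by_cases hgt : -(2*(n:ℤ)) < f k
    · exact ⟨k, hgt, h1⟩
    · have hs := hstep k
      exact ih (k+1) (by omega) (by rw [show k+1+d = k+(d+1) by omega]; exact h2)

end Stmt15

/-- every `(m,n)`-sequence has cyclic shifts whose disorder number
lies in `[0, 2m)` and in `(-2n, 0]` respectively. -/
theorem stmt_15 (m n : ℕ) (hm : 0 < m) (hn : 0 < n)
    (X : ℕ → ℤ) (hX : IsMNSeq m n X) :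
    (∃ i < m + n, 0 ≤ disorder m n ((cyclicShift m n)^[i] X) ∧
        disorder m n ((cyclicShift m n)^[i] X) < 2 * m) ∧
    (∃ j < m + n, -(2 * (n : ℤ)) < disorder m n ((cyclicShift m n)^[j] X) ∧
        disorder m n ((cyclicShift m n)^[j] X) ≤ 0) := by
  obtain ⟨hval, hc1, hc2⟩ := hX
  have hmn : 1 ≤ m + n := by omega
  -- the sum of the values is m - n
  have hsumX : ∑ i ∈ Finset.Icc 1 (m+n), X i = (m:ℤ) - n := by
    rw [← Finset.sum_filter_add_sum_filter_not (Finset.Icc 1 (m+n)) (fun i => X i = 1)]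
    have e1 : ∑ i ∈ (Finset.Icc 1 (m+n)).filter (fun i => X i = 1), X i
        = ((Finset.Icc 1 (m+n)).filter (fun i => X i = 1)).card • (1:ℤ) := by
      rw [← Finset.sum_const]
      exact Finset.sum_congr rfl (fun i hi => (Finset.mem_filter.mp hi).2)
    have e2 : (Finset.Icc 1 (m+n)).filter (fun i => ¬ X i = 1)
        = (Finset.Icc 1 (m+n)).filter (fun i => X i = -1) := by
      apply Finset.filter_congr
      intro i hi
      rcases hval i hi with h | h <;> simp [h]
    have e3 : ∑ i ∈ (Finset.Icc 1 (m+n)).filter (fun i => X i = -1), X i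
        = ((Finset.Icc 1 (m+n)).filter (fun i => X i = -1)).card • (-1:ℤ) := by
      rw [← Finset.sum_const]
      exact Finset.sum_congr rfl (fun i hi => (Finset.mem_filter.mp hi).2)
    rw [e1, e2, e3, hc1, hc2]
    simp [sub_eq_add_neg]
  -- the invariant for all iterates
  have hQ : ∀ k, (∀ i ∈ Finset.Icc 1 (m+n), ((cyclicShift m n)^[k] X) i = 1 ∨
        ((cyclicShift m n)^[k] X) i = -1) ∧
      ∑ i ∈ Finset.Icc 1 (m+n), ((cyclicShift m n)^[k] X) i = (m:ℤ) - n := by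
    intro k
    induction k with
    | zero => exact ⟨hval, hsumX⟩
    | succ k ih =>
      constructor
      · intro i hi
        rw [Finset.mem_Icc] at hi
        rw [Function.iterate_succ_apply']
        show (if i = 1 then _ else _) = 1 ∨ (if i = 1 then _ else _) = -1
        by_cases h1 : i = 1
        · rw [if_pos h1]
          exact ih.1 (m+n) (by rw [Finset.mem_Icc]; omega)
        · rw [if_neg h1]
          exact ih.1 (i-1) (by rw [Finset.mem_Icc]; omega)
      · rw [Function.iterate_succ_apply']
        rw [Stmt15.key_sum2 (m+n) hmn ((cyclicShift m n)^[k] X)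
          (cyclicShift m n ((cyclicShift m n)^[k] X)) rfl
          (fun i h2 _ => if_neg (by omega))]
        exact ih.2
  -- the step relation
  have hstep : ∀ k, disorder m n ((cyclicShift m n)^[k+1] X)
      = disorder m n ((cyclicShift m n)^[k] X) + 2*n ∨
      disorder m n ((cyclicShift m n)^[k+1] X)
      = disorder m n ((cyclicShift m n)^[k] X) - 2*m := by
    intro k
    have e1 : 2 * disorder m n ((cyclicShift m n)^[k+1] X)
        = 2 * disorder m n ((cyclicShift m n)^[k] X)
          + 2 * ((m+n : ℕ):ℤ) * (((cyclicShift m n)^[k] X) (m+n))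
          - 2 * ((m:ℤ) - n) := by
      rw [Stmt15.two_disorder m n _ (hQ (k+1)).1, Function.iterate_succ_apply',
        Stmt15.key_sum (m+n) hmn ((cyclicShift m n)^[k] X)
          (cyclicShift m n ((cyclicShift m n)^[k] X)) rfl
          (fun i h2 _ => if_neg (by omega)),
        ← Stmt15.two_disorder m n _ (hQ k).1, (hQ k).2]
    rcases (hQ k).1 (m+n) (by rw [Finset.mem_Icc]; omega) with hv | hv <;>
      rw [hv] at e1 <;> [left; right] <;> omega
  -- periodicity
  have hper : ∀ k, disorder m n ((cyclicShift m n)^[k + (m+n)] X)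
      = disorder m n ((cyclicShift m n)^[k] X) := by
    intro k
    rw [Function.iterate_add_apply]
    exact Stmt15.disorder_congr (Stmt15.iterate_congr m n _ X
      (fun i hi => by
        rw [Finset.mem_Icc] at hi
        exact Stmt15.iterate_N m n X i hi.1 hi.2) k)
  have hmod : ∀ k, disorder m n ((cyclicShift m n)^[k % (m+n)] X)
      = disorder m n ((cyclicShift m n)^[k] X) := by
    have hq : ∀ q r, disorder m n ((cyclicShift m n)^[r + q * (m+n)] X)
        = disorder m n ((cyclicShift m n)^[r] X) := by
      intro q
      induction q with
      | zero => intro r; simp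
      | succ q ih =>
        intro r
        rw [show r + (q+1) * (m+n) = (r + q * (m+n)) + (m+n) by ring, hper]
        exact ih r
    intro k
    conv_rhs => rw [← Nat.mod_add_div' k (m+n)]
    exact (hq (k / (m+n)) (k % (m+n))).symm
  -- the sum over one full period of rotations vanishes
  have hsum0 : ∑ k ∈ Finset.range (m+n), disorder m n ((cyclicShift m n)^[k] X) = 0 := by
    have h2 : 2 * ∑ k ∈ Finset.range (m+n), disorder m n ((cyclicShift m n)^[k] X)
        = 0 := by
      rw [Finset.mul_sum]
      calc ∑ k ∈ Finset.range (m+n), 2 * disorder m n ((cyclicShift m n)^[k] X)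
          = ∑ k ∈ Finset.range (m+n), ∑ i ∈ Finset.Icc 1 (m+n),
              (((m+n:ℕ):ℤ) + 1 - 2 * i) * ((cyclicShift m n)^[k] X) i :=
            Finset.sum_congr rfl (fun k _ => Stmt15.two_disorder m n _ (hQ k).1)
        _ = ∑ i ∈ Finset.Icc 1 (m+n), ∑ k ∈ Finset.range (m+n),
              (((m+n:ℕ):ℤ) + 1 - 2 * i) * ((cyclicShift m n)^[k] X) i :=
            Finset.sum_comm
        _ = ∑ i ∈ Finset.Icc 1 (m+n), (((m+n:ℕ):ℤ) + 1 - 2 * i) * ((m:ℤ) - n) := by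
            apply Finset.sum_congr rfl
            intro i hi
            rw [Finset.mem_Icc] at hi
            rw [← Finset.mul_sum, Stmt15.rot_sum m n X i hi.1 hi.2, hsumX]
        _ = (∑ i ∈ Finset.Icc 1 (m+n), (((m+n:ℕ):ℤ) + 1 - 2 * i)) * ((m:ℤ) - n) :=
            (Finset.sum_mul _ _ _).symm
        _ = 0 := by rw [Stmt15.coeff_sum_zero]; ring
    omega
  -- existence of a nonnegative and a nonpositive value
  have hA : ∃ a < m + n, 0 ≤ disorder m n ((cyclicShift m n)^[a] X) := by
    by_contra hcon
    push_neg at hcon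
    have : ∑ k ∈ Finset.range (m+n), disorder m n ((cyclicShift m n)^[k] X)
        < ∑ k ∈ Finset.range (m+n), (0:ℤ) := by
      apply Finset.sum_lt_sum_of_nonempty ⟨0, Finset.mem_range.mpr (by omega)⟩
      intro i hi
      exact hcon i (Finset.mem_range.mp hi)
    simp [hsum0] at this
  have hB : ∃ b < m + n, disorder m n ((cyclicShift m n)^[b] X) ≤ 0 := by
    by_contra hcon
    push_neg at hcon
    have : ∑ k ∈ Finset.range (m+n), (0:ℤ)
        < ∑ k ∈ Finset.range (m+n), disorder m n ((cyclicShift m n)^[k] X) := by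
      apply Finset.sum_lt_sum_of_nonempty ⟨0, Finset.mem_range.mpr (by omega)⟩
      intro i hi
      exact hcon i (Finset.mem_range.mp hi)
    simp [hsum0] at this
  obtain ⟨a, haN, ha0⟩ := hA
  obtain ⟨b, hbN, hb0⟩ := hB
  constructor
  · -- find a down-crossing into [0, 2m)
    have hd : ∃ d, disorder m n ((cyclicShift m n)^[a + d] X) ≤ 0 := by
      by_cases hab : a ≤ b
      · exact ⟨b - a, by rw [show a + (b - a) = b by omega]; exact hb0⟩
      · exact ⟨b + (m+n) - a, by
          rw [show a + (b + (m+n) - a) = b + (m+n) by omega, hper]; exact hb0⟩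
    obtain ⟨d, hd⟩ := hd
    obtain ⟨i, hi0, hi2⟩ := Stmt15.climb m n hm
      (fun k => disorder m n ((cyclicShift m n)^[k] X)) hstep d a ha0 hd
    exact ⟨i % (m+n), Nat.mod_lt _ (by omega), by rw [hmod]; exact hi0,
      by rw [hmod]; exact hi2⟩
  · have hd : ∃ d, 0 ≤ disorder m n ((cyclicShift m n)^[b + d] X) := by
      by_cases hab : b ≤ a
      · exact ⟨a - b, by rw [show b + (a - b) = a by omega]; exact ha0⟩
      · exact ⟨a + (m+n) - b, by
          rw [show b + (a + (m+n) - b) = a + (m+n) by omega, hper]; exact ha0⟩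
    obtain ⟨d, hd⟩ := hd
    obtain ⟨j, hj0, hj2⟩ := Stmt15.descend m n hn
      (fun k => disorder m n ((cyclicShift m n)^[k] X)) hstep d b hb0 hd
    exact ⟨j % (m+n), Nat.mod_lt _ (by omega),
      by rw [hmod]; exact (by simpa using hj0),
      by rw [hmod]; exact hj2⟩
end
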